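/- arXiv:math/0505418 — 12 statements merged into one kernel-verified Lean document; each statement's English description precedes it below -/
import Mathlib

section
/- For every simple proposition S : SP and every realiser r : Cr S, if the type MR S r is inhabited then the type Tp S is inhabited (i.e. the standard translation of S is true). -/
universe u

/-- Simple propositions. -/
inductive SP : Type 1 where
  | atom : Type → SP
  | bot  : SP
  | and  : SP → SP → SP
  | or   : SP → SP → SP
  | imp  : SP → SP → SP
  | all  : (A : Type) → (A → SP) → SP
  | ex   : (A : Type) → (A → SP) → SP

/-- The standard (homomorphic) translation into types. -/
def Tp : SP → Type
  | .atom A  => A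
  | .bot     => Empty
  | .and A B => Tp A × Tp B
  | .or A B  => Tp A ⊕ Tp B
  | .imp A B => Tp A → Tp B
  | .all A P => ∀ x : A, Tp (P x)
  | .ex A P  => Σ x : A, Tp (P x)

/-- The crude type of potential realisers. -/
def Cr : SP → Type
  | .atom _  => Unit
  | .bot     => Unit
  | .and A B => Cr A × Cr B
  | .or A B  => Cr A ⊕ Cr B
  | .imp A B => Cr A → Cr B
  | .all A P => ∀ x : A, Cr (P x)
  | .ex A P  => Σ x : A, Cr (P x)

/-- Modified realisability (with truth). -/
def MR : (S : SP) → Cr S → Type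
  | .atom A, _  => A
  | .bot, _     => Empty
  | .and A B, r => MR A r.1 × MR B r.2
  | .or A B, r  =>
      match r with
      | .inl s => MR A s
      | .inr t => MR B t
  | .imp A B, r => (Tp A → Tp B) × (∀ s : Cr A, MR A s → MR B (r s))
  | .all A P, r => ∀ x : A, MR (P x) (r x)
  | .ex A P, r  => MR (P r.1) r.2

def mrTp : (S : SP) → (r : Cr S) → MR S r → Tp S
  | .atom _, _, m => m
  | .bot, _, m => m
  | .and A B, r, m => (mrTp A r.1 m.1, mrTp B r.2 m.2)
  | .or A B, .inl s, m => .inl (mrTp A s m)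
  | .or A B, .inr t, m => .inr (mrTp B t m)
  | .imp _ _, _, m => m.1
  | .all A P, r, m => fun x => mrTp (P x) (r x) (m x)
  | .ex A P, r, m => ⟨r.1, mrTp (P r.1) r.2 m⟩

/-- Correctness: anything MR-realised is true under the standard translation. -/
theorem mr_correctness (S : SP) (r : Cr S) :
    Nonempty (MR S r) → Nonempty (Tp S) := by
  exact fun ⟨m⟩ => ⟨mrTp S r m⟩
end

section
/- Let A and B be types and P : A → B → SP. If there is a realiser r : Cr (∀(A, fun x => ∃(B, fun y => P x y))) such that MR (∀(A, fun x => ∃(B, fun y => P x y))) r is inhabited, then there exists a function f : A → B such that Tp (P x (f x)) is inhabited for every x : A. -/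
universe u

/-- Realisability with truth implies truth. -/
def mrToTp : (S : SP) → (r : Cr S) → MR S r → Tp S
  | .atom _, _, m => m
  | .bot, _, m => m.elim
  | .and A B, r, m => (mrToTp A r.1 m.1, mrToTp B r.2 m.2)
  | .or A B, .inl s, m => Sum.inl (mrToTp A s m)
  | .or A B, .inr t, m => Sum.inr (mrToTp B t m)
  | .imp _ _, _, m => m.1
  | .all A P, r, m => fun x => mrToTp (P x) (r x) (m x)
  | .ex A P, r, m => ⟨r.1, mrToTp (P r.1) r.2 m⟩

/-- Extraction for ∀∃-formulae. -/
theorem mr_extraction (A B : Type) (P : A → B → SP)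
    (r : Cr (SP.all A (fun x => SP.ex B (fun y => P x y))))
    (h : Nonempty (MR (SP.all A (fun x => SP.ex B (fun y => P x y))) r)) :
    ∃ f : A → B, ∀ x : A, Nonempty (Tp (P x (f x))) := by
  obtain ⟨m⟩ := h
  exact ⟨fun x => (r x).1, fun x => ⟨mrToTp (P x (r x).1) (r x).2 (m x)⟩⟩
end

section
/- For every simple proposition S : SP and every realiser r : Cr' S, if the type MR' S r is inhabited then the type Tp S is inhabited (i.e. the standard translation of S is true). -/
universe u

/-- The modified crude type of potential realisers (never empty in the ∃ case). -/
def Cr' : SP → Type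
  | .atom _  => Unit
  | .bot     => Unit
  | .and A B => Cr' A × Cr' B
  | .or A B  => Cr' A ⊕ Cr' B
  | .imp A B => Cr' A → Cr' B
  | .all A P => ∀ x : A, Cr' (P x)
  | .ex A P  => Unit ⊕ Σ x : A, Cr' (P x)

/-- Modified realisability (with truth) for the modified crude types. -/
def MR' : (S : SP) → Cr' S → Type
  | .atom A, _  => A
  | .bot, _     => Empty
  | .and A B, r => MR' A r.1 × MR' B r.2
  | .or A B, r  =>
      match r with
      | .inl s => MR' A s
      | .inr t => MR' B t
  | .imp A B, r => (Tp A → Tp B) × (∀ s : Cr' A, MR' A s → MR' B (r s))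
  | .all A P, r => ∀ x : A, MR' (P x) (r x)
  | .ex A P, r  =>
      match r with
      | .inl _ => Empty
      | .inr t => MR' (P t.1) t.2

/-- The sequent `A ⊢ B` is MR'-realised. -/
def MRrealised' (A B : SP) : Prop :=
  ∃ r : Cr' (SP.imp A B), Nonempty (MR' (SP.imp A B) r)


def mr2tp : (S : SP) → (r : Cr' S) → MR' S r → Tp S
  | .atom _, _, a => a
  | .bot, _, e => e.elim
  | .and A B, r, m => (mr2tp A r.1 m.1, mr2tp B r.2 m.2)
  | .or A _, .inl s, m => Sum.inl (mr2tp A s m)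
  | .or _ B, .inr t, m => Sum.inr (mr2tp B t m)
  | .imp _ _, _, m => m.1
  | .all A P, r, m => fun x => mr2tp (P x) (r x) (m x)
  | .ex _ P, .inl _, m => m.elim
  | .ex _ P, .inr t, m => ⟨t.1, mr2tp (P t.1) t.2 m⟩

/-- Correctness: anything MR'-realised is true under the standard translation. -/
theorem mr'_correctness (S : SP) (r : Cr' S) :
    Nonempty (MR' S r) → Nonempty (Tp S) := by
  exact fun ⟨m⟩ => ⟨mr2tp S r m⟩
end

section
/- The disjunction axioms and rule are MR-realised: for all simple propositions A, B, C : SP, the sequents A ⊢ A ∨ B and B ⊢ A ∨ B are MR-realised, and if the sequents A ⊢ C and B ⊢ C are both MR-realised then the sequent A ∨ B ⊢ C is MR-realised. -/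
universe u

/-- The sequent `A ⊢ B` is MR-realised. -/
def MRrealised (A B : SP) : Prop :=
  ∃ r : Cr (SP.imp A B), Nonempty (MR (SP.imp A B) r)

/-- The disjunction axioms and rule are MR-realised. -/
theorem mr_disjunction (A B C : SP) :
    MRrealised A (SP.or A B) ∧
    MRrealised B (SP.or A B) ∧
    (MRrealised A C → MRrealised B C → MRrealised (SP.or A B) C) := by
  refine ⟨⟨Sum.inl, ⟨Sum.inl, fun s m => m⟩⟩,
          ⟨Sum.inr, ⟨Sum.inr, fun s m => m⟩⟩, ?_⟩
  rintro ⟨ra, ⟨⟨fa, ma⟩⟩⟩ ⟨rb, ⟨⟨fb, mb⟩⟩⟩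
  refine ⟨Sum.elim ra rb, ⟨Sum.elim fa fb, fun s m => ?_⟩⟩
  cases s with
  | inl s => exact ma s m
  | inr t => exact mb t m
end

section
/- The infinitary universal quantifier rules are MR-realised: for every simple proposition A : SP, every type S and every P : S → SP: (1) if there is a family r : ∀ t : S, Cr (A → P t) such that MR (A → P t) (r t) is inhabited for every t : S, then the sequent A ⊢ ∀(S,P) is MR-realised; (2) if the sequent A ⊢ ∀(S,P) is MR-realised, then for every t : S the sequent A ⊢ P t is MR-realised. -/
universe u

/-- The infinitary universal quantifier rules are MR-realised. -/
theorem mr_forall_rules (A : SP) (S : Type) (P : S → SP) :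
    ((∃ r : ∀ t : S, Cr (SP.imp A (P t)),
        ∀ t : S, Nonempty (MR (SP.imp A (P t)) (r t))) →
      MRrealised A (SP.all S P)) ∧
    (MRrealised A (SP.all S P) → ∀ t : S, MRrealised A (P t)) := by
  constructor
  · rintro ⟨r, hr⟩
    have m : ∀ t : S, MR (SP.imp A (P t)) (r t) := fun t => Classical.choice (hr t)
    refine ⟨fun c t => r t c, ⟨⟨fun a t => (m t).1 a, fun s h t => (m t).2 s h⟩⟩⟩
  · rintro ⟨r, ⟨m⟩⟩ t
    exact ⟨fun c => r c t, ⟨⟨fun a => m.1 a t, fun s h => m.2 s h t⟩⟩⟩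
end

section
/- The infinitary existential quantifier rules are MR-realised: for every simple proposition A : SP, every type S and every P : S → SP: (1) if there is a family r : ∀ t : S, Cr (P t → A) such that MR (P t → A) (r t) is inhabited for every t : S, then the sequent ∃(S,P) ⊢ A is MR-realised; (2) if the sequent ∃(S,P) ⊢ A is MR-realised, then for every t : S the sequent P t ⊢ A is MR-realised. -/
universe u

/-- The infinitary existential quantifier rules are MR-realised. -/
theorem mr_exists_rules (A : SP) (S : Type) (P : S → SP) :
    ((∃ r : ∀ t : S, Cr (SP.imp (P t) A),
        ∀ t : S, Nonempty (MR (SP.imp (P t) A) (r t))) →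
      MRrealised (SP.ex S P) A) ∧
    (MRrealised (SP.ex S P) A → ∀ t : S, MRrealised (P t) A) := by
  constructor
  · rintro ⟨r, hr⟩
    have h : ∀ t : S, MR (SP.imp (P t) A) (r t) := fun t => Classical.choice (hr t)
    refine ⟨fun s => r s.1 s.2, ⟨⟨fun x => (h x.1).1 x.2, fun s hs => (h s.1).2 s.2 hs⟩⟩⟩
  · rintro ⟨r, ⟨m⟩⟩ t
    exact ⟨fun c => r ⟨t, c⟩, ⟨⟨fun x => m.1 ⟨t, x⟩, fun c hc => m.2 ⟨t, c⟩ hc⟩⟩⟩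
end

section
/- The full absurdity axiom is MR'-realised: for every simple proposition A : SP, the sequent ⊥ ⊢ A is MR'-realised, i.e. there exists r : Cr' (⊥ → A) such that MR' (⊥ → A) r is inhabited. -/
universe u

/-- Every modified crude type is inhabited. -/
def Cr'dflt : (A : SP) → Cr' A
  | .atom _  => ()
  | .bot     => ()
  | .and A B => (Cr'dflt A, Cr'dflt B)
  | .or A _  => .inl (Cr'dflt A)
  | .imp _ B => fun _ => Cr'dflt B
  | .all _ P => fun x => Cr'dflt (P x)
  | .ex _ _  => .inl ()

/-- The full absurdity axiom ⊥ ⊢ A is MR'-realised. -/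
theorem mr'_full_absurdity (A : SP) : MRrealised' SP.bot A := by
  exact ⟨fun _ => Cr'dflt A, ⟨fun e => e.elim, fun _ m => m.elim⟩⟩
end

section
/- The infinitary existential left rule and the full absurdity axiom of the system IPC∞ are MR'-realised: for every simple proposition A : SP, every type S and every P : S → SP, if there is a family r : ∀ t : S, Cr' (P t → A) such that MR' (P t → A) (r t) is inhabited for every t : S, then the sequent ∃(S,P) ⊢ A is MR'-realised; moreover for every A : SP the sequent ⊥ ⊢ A is MR'-realised. -/
universe u

/-- A default crude realiser for every simple proposition. -/
def cdef : (A : SP) → Cr' A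
  | .atom _  => ()
  | .bot     => ()
  | .and A B => (cdef A, cdef B)
  | .or A _  => Sum.inl (cdef A)
  | .imp _ B => fun _ => cdef B
  | .all _ P => fun x => cdef (P x)
  | .ex _ _  => Sum.inl ()

/-- The infinitary existential left rule and the full absurdity axiom are MR'-realised. -/
theorem mr'_exists_left_and_absurdity :
    (∀ (A : SP) (S : Type) (P : S → SP),
      (∃ r : ∀ t : S, Cr' (SP.imp (P t) A),
        ∀ t : S, Nonempty (MR' (SP.imp (P t) A) (r t))) →
      MRrealised' (SP.ex S P) A) ∧
    (∀ A : SP, MRrealised' SP.bot A) := by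
  constructor
  · intro A S P ⟨r, hr⟩
    have hm : Nonempty (∀ t : S, MR' (SP.imp (P t) A) (r t)) :=
      Classical.nonempty_pi.mpr hr
    obtain ⟨m⟩ := hm
    refine ⟨fun s => match s with
      | .inl _ => cdef A
      | .inr t => r t.1 t.2, ⟨⟨fun e => (m e.1).1 e.2, fun s => ?_⟩⟩⟩
    match s with
    | .inl _ => exact fun e => e.elim
    | .inr ⟨t, c⟩ => exact fun h => (m t).2 c h
  · intro A
    exact ⟨fun _ => cdef A, ⟨⟨fun e => e.elim, fun _ e => e.elim⟩⟩⟩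
end

section
/- For every propositional function P : ℕ → SP, the induction scheme, i.e. the simple proposition (P 0 ∧ ∀(ℕ, fun x => P x → P (x+1))) → ∀(ℕ, P), is MR-realised: there exists a realiser r in its crude type Cr such that MR of this simple proposition at r is inhabited. -/
universe u

/-- The induction scheme is MR-realised. -/
theorem mr_induction (P : ℕ → SP) :
    ∃ r : Cr (SP.imp
        (SP.and (P 0) (SP.all ℕ (fun x => SP.imp (P x) (P (x + 1)))))
        (SP.all ℕ P)),
      Nonempty (MR (SP.imp
        (SP.and (P 0) (SP.all ℕ (fun x => SP.imp (P x) (P (x + 1)))))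
        (SP.all ℕ P)) r) := by
  refine ⟨fun c n => Nat.rec c.1 c.2 n, ⟨?_, ?_⟩⟩
  · exact fun t n => Nat.rec t.1 t.2 n
  · exact fun s hs n => Nat.rec hs.1 (fun k ih => (hs.2 k).2 _ ih) n
end

section
/- For every propositional function P : ℕ → SP, the induction scheme, i.e. the simple proposition (P 0 ∧ ∀(ℕ, fun x => P x → P (x+1))) → ∀(ℕ, P), is MR'-realised: there exists a realiser r in its crude type Cr' such that MR' of this simple proposition at r is inhabited. -/
universe u

/-- The induction scheme is MR'-realised. -/
theorem mr'_induction (P : ℕ → SP) :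
    ∃ r : Cr' (SP.imp
        (SP.and (P 0) (SP.all ℕ (fun x => SP.imp (P x) (P (x + 1)))))
        (SP.all ℕ P)),
      Nonempty (MR' (SP.imp
        (SP.and (P 0) (SP.all ℕ (fun x => SP.imp (P x) (P (x + 1)))))
        (SP.all ℕ P)) r) := by
  refine ⟨fun s n => Nat.rec s.1 (fun k ih => s.2 k ih) n, ⟨?_, ?_⟩⟩
  · exact fun t n => Nat.rec t.1 (fun k ih => t.2 k ih) n
  · intro s h n
    induction n with
    | zero => exact h.1
    | succ k ih => exact (h.2 k).2 _ ih
end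

section
/- For any types A and B and any binary propositional function P : A → B → SP, the type-theoretic choice principle, i.e. the simple proposition ∀(A, fun x => ∃(B, fun y => P x y)) → ∃(A → B, fun g => ∀(A, fun x => P x (g x))), is MR-realised: there exists a realiser r in its crude type Cr such that MR of this simple proposition at r is inhabited. -/
universe u

/-- The type-theoretic choice principle is MR-realised. -/
theorem mr_choice (A B : Type) (P : A → B → SP) :
    ∃ r : Cr (SP.imp
        (SP.all A (fun x => SP.ex B (fun y => P x y)))
        (SP.ex (A → B) (fun g => SP.all A (fun x => P x (g x))))),
      Nonempty (MR (SP.imp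
        (SP.all A (fun x => SP.ex B (fun y => P x y)))
        (SP.ex (A → B) (fun g => SP.all A (fun x => P x (g x))))) r) := by
  refine ⟨fun f => ⟨fun x => (f x).1, fun x => (f x).2⟩,
    ⟨fun f => ⟨fun x => (f x).1, fun x => (f x).2⟩, fun s m => fun x => m x⟩⟩
end

section
/- For any type A, any inhabited type B, and any binary propositional function P : A → B → SP, the type-theoretic choice principle, i.e. the simple proposition ∀(A, fun x => ∃(B, fun y => P x y)) → ∃(A → B, fun g => ∀(A, fun x => P x (g x))), is MR'-realised: there exists a realiser r in its crude type Cr' such that MR' of this simple proposition at r is inhabited. -/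
universe u

/-- Every modified crude type is inhabited. -/
def cr0 : (S : SP) → Cr' S
  | .atom _  => ()
  | .bot     => ()
  | .and A B => (cr0 A, cr0 B)
  | .or A _  => Sum.inl (cr0 A)
  | .imp _ B => fun _ => cr0 B
  | .all _ P => fun x => cr0 (P x)
  | .ex _ _  => Sum.inl ()

/-- The type-theoretic choice principle is MR'-realised when B is inhabited. -/
theorem mr'_choice (A B : Type) (hB : Nonempty B) (P : A → B → SP) :
    ∃ r : Cr' (SP.imp
        (SP.all A (fun x => SP.ex B (fun y => P x y)))
        (SP.ex (A → B) (fun g => SP.all A (fun x => P x (g x))))),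
      Nonempty (MR' (SP.imp
        (SP.all A (fun x => SP.ex B (fun y => P x y)))
        (SP.ex (A → B) (fun g => SP.all A (fun x => P x (g x))))) r) := by
  obtain ⟨b0⟩ := hB
  let extract : ∀ x : A, (Unit ⊕ Σ y : B, Cr' (P x y)) → Σ y : B, Cr' (P x y) :=
    fun x s => match s with
      | .inl _ => ⟨b0, cr0 (P x b0)⟩
      | .inr t => t
  refine ⟨fun s => Sum.inr ⟨fun x => (extract x (s x)).1, fun x => (extract x (s x)).2⟩,
    ⟨⟨fun f => ⟨fun x => (f x).1, fun x => (f x).2⟩, ?_⟩⟩⟩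
  intro s m
  show ∀ x : A, MR' (P x (extract x (s x)).1) (extract x (s x)).2
  intro x
  have mx := m x
  revert mx
  show MR' (SP.ex B fun y => P x y) (s x) →
    MR' (P x (extract x (s x)).1) (extract x (s x)).2
  cases s x with
  | inl u => exact fun h => h.elim
  | inr t => exact fun h => h
end
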